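/- arXiv:2109.04365 — 6 statements merged into one kernel-verified Lean document; each statement's English description precedes it below -/
import Mathlib

section
/- Let a, b be nonzero complex numbers with sign(a) ≠ ± sign(b). Then |a|/|b| is uniquely determined by the three phases sign(a), sign(b), sign(a+b). Concretely, with c₁ = Im(sign(a)/sign(a+b)) and c₂ = Im(sign(b)/sign(a+b)), one has c₁ ≠ 0 and |a|/|b| = -c₂/c₁. -/
noncomputable def csign (z : ℂ) : ℂ := if z = 0 then 0 else z / (‖z‖ : ℂ)

/-!
Writing `u, v, w` for the phases of `a, b, a + b`, the identity `‖a‖ u + ‖b‖ v = ‖a + b‖ w`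
divided by `w` has real right-hand side, so `‖a‖ Im (u / w) + ‖b‖ Im (v / w) = 0`.
If `Im (u / w)` vanished, so would `Im (v / w)`; unimodular numbers with real quotient agree up
to sign, so `u = ±w` and `v = ±w`, forcing `u = ±v`.
-/

lemma csign_of_ne_zero {z : ℂ} (hz : z ≠ 0) : csign z = z / (‖z‖ : ℂ) := if_neg hz

lemma csign_neg (z : ℂ) : csign (-z) = -csign z := by
  by_cases hz : z = 0
  · simp [hz, csign]
  · rw [csign_of_ne_zero hz, csign_of_ne_zero (neg_ne_zero.mpr hz), norm_neg, neg_div]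

lemma norm_csign {z : ℂ} (hz : z ≠ 0) : ‖csign z‖ = 1 := by
  rw [csign_of_ne_zero hz, norm_div, Complex.norm_real, norm_norm,
    div_self (norm_ne_zero_iff.mpr hz)]

lemma norm_mul_csign (z : ℂ) : (‖z‖ : ℂ) * csign z = z := by
  by_cases hz : z = 0
  · simp [hz]
  · rw [csign_of_ne_zero hz, mul_div_cancel₀ _ (by exact_mod_cast norm_ne_zero_iff.mpr hz)]

lemma div_csign_self (z : ℂ) : z / csign z = ‖z‖ := by
  by_cases hz : z = 0
  · simp [hz, csign]
  · rw [csign_of_ne_zero hz, div_div_cancel₀ hz]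

lemma norm_mul_im_div_csign_add_eq_zero (a b : ℂ) :
    ‖a‖ * (csign a / csign (a + b)).im + ‖b‖ * (csign b / csign (a + b)).im = 0 := by
  rw [← Complex.im_ofReal_mul, ← Complex.im_ofReal_mul, mul_div_assoc', mul_div_assoc',
    norm_mul_csign, norm_mul_csign, ← Complex.add_im, ← add_div, div_csign_self,
    Complex.ofReal_im]

lemma eq_or_eq_neg_of_norm_eq_one_of_im_eq_zero {z : ℂ} (hz : ‖z‖ = 1) (him : z.im = 0) :
    z = 1 ∨ z = -1 := by
  have hre : |z.re| = 1 := (Complex.abs_re_eq_norm.mpr him).trans hz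
  rcases abs_eq zero_le_one |>.mp hre with h | h
  · exact Or.inl (Complex.ext h him)
  · exact Or.inr (Complex.ext h (by simpa using him))

lemma eq_or_eq_neg_of_im_div_eq_zero {z w : ℂ} (hz : ‖z‖ = 1) (hw : ‖w‖ = 1)
    (him : (z / w).im = 0) : z = w ∨ z = -w := by
  have hw0 : w ≠ 0 := norm_ne_zero_iff.mp (by rw [hw]; exact one_ne_zero)
  have hzw : ‖z / w‖ = 1 := by rw [norm_div, hz, hw, div_one]
  rcases eq_or_eq_neg_of_norm_eq_one_of_im_eq_zero hzw him with h | h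
  · exact Or.inl ((div_eq_one_iff_eq hw0).mp h)
  · exact Or.inr (by rw [← neg_one_mul, ← h, div_mul_cancel₀ _ hw0])

theorem stmt_1 (a b : ℂ) (ha : a ≠ 0) (hb : b ≠ 0)
    (h1 : csign a ≠ csign b) (h2 : csign a ≠ -csign b) :
    (csign a / csign (a + b)).im ≠ 0 ∧
      ‖a‖ / ‖b‖ =
        -((csign b / csign (a + b)).im) / ((csign a / csign (a + b)).im) := by
  have hab : a + b ≠ 0 := fun h => h2 (by rw [eq_neg_of_add_eq_zero_right h, csign_neg, neg_neg])
  have key := norm_mul_im_div_csign_add_eq_zero a b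
  have hb' : ‖b‖ ≠ 0 := norm_ne_zero_iff.mpr hb
  have hc₁ : (csign a / csign (a + b)).im ≠ 0 := by
    intro hc₁
    have hc₂ : (csign b / csign (a + b)).im = 0 := by
      simpa [hc₁, hb'] using key
    rcases eq_or_eq_neg_of_im_div_eq_zero (norm_csign ha) (norm_csign hab) hc₁ with hu | hu <;>
    rcases eq_or_eq_neg_of_im_div_eq_zero (norm_csign hb) (norm_csign hab) hc₂ with hv | hv
    all_goals rw [hu, hv] at h1 h2; simp at h1 h2
  refine ⟨hc₁, ?_⟩
  rw [eq_div_iff hc₁, div_mul_eq_mul_div, div_eq_iff hb']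
  linarith
end

section
/- For every dimension d ≥ 1 there exists a measurement matrix A ∈ ℂ^{d²×d} such that for all x, y ∈ ℂ^d, if sign(Ax) = sign(Ay) (entrywise) then y = t·x for some real t > 0. In particular, the d² measurements {sign(x_k) : k ∈ [d]} together with {sign(x_k + x_l), sign(x_k + i·x_l) : 1 ≤ k < l ≤ d} determine x up to a positive scalar. -/
/-!
Equal signs of `x k` and `y k` give `y k = s_k * x k` with `s_k > 0`, or `x k = y k = 0`.
For nonzero `a = x k`, `b = x l` with scales `s`, `t`, collinearity of `a + b` with `s a + t b`
makes `Im ((s a + t b) * conj (a + b)) = (s - t) * Im (a * conj b)` vanish, and collinearity of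
`a + i b` with `s a + i t b` makes `Im ((s a + i t b) * conj (a + i b)) = (t - s) * Re (a * conj b)`
vanish. As `a * conj b ≠ 0`, this forces `s = t`, so all scales agree.
-/

open Complex ComplexConjugate Matrix

lemma csign_eq_zero_iff {z : ℂ} : csign z = 0 ↔ z = 0 := by
  unfold csign
  split_ifs with hz <;> simp [hz]

lemma eq_zero_of_csign_eq {u v : ℂ} (h : csign u = csign v) (hu : u = 0) : v = 0 := by
  rwa [← csign_eq_zero_iff, ← h, csign_eq_zero_iff]

lemma exists_pos_mul_of_csign_eq {u v : ℂ} (h : csign u = csign v) (hu : u ≠ 0) :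
    ∃ r : ℝ, 0 < r ∧ v = r * u := by
  have hv : v ≠ 0 := fun hv => hu (eq_zero_of_csign_eq h.symm hv)
  have hu' : (‖u‖ : ℂ) ≠ 0 := by simpa using hu
  have hv' : (‖v‖ : ℂ) ≠ 0 := by simpa using hv
  refine ⟨‖v‖ / ‖u‖, by positivity, ?_⟩
  unfold csign at h
  rw [if_neg hu, if_neg hv, div_eq_div_iff hu' hv'] at h
  push_cast
  field_simp
  linear_combination -h

lemma im_mul_conj_eq_zero_of_csign_eq {u v : ℂ} (h : csign u = csign v) :
    (v * conj u).im = 0 := by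
  rcases eq_or_ne u 0 with hu | hu
  · simp [hu]
  · obtain ⟨r, -, rfl⟩ := exists_pos_mul_of_csign_eq h hu
    rw [mul_assoc, mul_conj, ← ofReal_mul, ofReal_im]

lemma eq_of_csign_add_eq {a b : ℂ} (ha : a ≠ 0) (hb : b ≠ 0) {s t : ℝ}
    (h₁ : csign (a + b) = csign (s * a + t * b))
    (h₂ : csign (a + I * b) = csign (s * a + I * (t * b))) : s = t := by
  have c₁ := im_mul_conj_eq_zero_of_csign_eq h₁
  have c₂ := im_mul_conj_eq_zero_of_csign_eq h₂
  have hst : ((s - t : ℝ) : ℂ) * (a * conj b) = 0 := by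
    apply Complex.ext <;>
      simp only [mul_re, mul_im, add_re, add_im, ofReal_re, ofReal_im, conj_re, conj_im, I_re, I_im,
        zero_re, zero_im] at c₁ c₂ ⊢
    · linear_combination -c₂
    · linear_combination c₁
  have hab : a * conj b ≠ 0 := mul_ne_zero ha ((map_ne_zero _).mpr hb)
  exact sub_eq_zero.mp (ofReal_eq_zero.mp ((mul_eq_zero.mp hst).resolve_right hab))

def SignsAgree {m n : Type*} [Fintype n] (A : Matrix m n ℂ) (x y : n → ℂ) : Prop :=
  ∀ i, csign ((A *ᵥ x) i) = csign ((A *ᵥ y) i)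

section PairMeasurement

variable {ι : Type*} [LinearOrder ι]

def pairCoeff (k l : ι) : ℂ := if k = l then 0 else if k < l then 1 else I

variable [Fintype ι]

variable (ι) in
/-- Row `(k, k)` measures `x k`; for `k < l`, row `(k, l)` measures `x k + x l` and
row `(l, k)` measures `x k + i x l`. -/
noncomputable def pairMeasurement : Matrix (ι × ι) ι ℂ :=
  Matrix.of fun p => Pi.single (min p.1 p.2) 1 + Pi.single (max p.1 p.2) (pairCoeff p.1 p.2)

lemma pairMeasurement_mulVec (x : ι → ℂ) (k l : ι) :
    (pairMeasurement ι *ᵥ x) (k, l) = x (min k l) + pairCoeff k l * x (max k l) := by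
  simp only [mulVec, pairMeasurement, of_apply, add_dotProduct, single_dotProduct, one_mul]

variable {x y : ι → ℂ}

lemma SignsAgree.csign_apply_eq (h : SignsAgree (pairMeasurement ι) x y) (k : ι) :
    csign (x k) = csign (y k) := by
  simpa [pairMeasurement_mulVec, pairCoeff] using h (k, k)

lemma SignsAgree.scale_eq_of_lt (h : SignsAgree (pairMeasurement ι) x y) {k l : ι} (hkl : k < l)
    (hk : x k ≠ 0) (hl : x l ≠ 0) {s t : ℝ} (hs : y k = s * x k) (ht : y l = t * x l) :
    s = t := by
  have h₁ := h (k, l)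
  have h₂ := h (l, k)
  simp only [pairMeasurement_mulVec, pairCoeff, min_eq_left hkl.le, max_eq_right hkl.le,
    min_eq_right hkl.le, max_eq_left hkl.le, if_neg hkl.ne, if_pos hkl, if_neg hkl.ne',
    if_neg (not_lt_of_gt hkl), one_mul, hs, ht] at h₁ h₂
  exact eq_of_csign_add_eq hk hl h₁ h₂

lemma SignsAgree.scale_eq (h : SignsAgree (pairMeasurement ι) x y) {k l : ι}
    (hk : x k ≠ 0) (hl : x l ≠ 0) {s t : ℝ} (hs : y k = s * x k) (ht : y l = t * x l) :
    s = t := by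
  rcases lt_trichotomy k l with hkl | rfl | hkl
  · exact h.scale_eq_of_lt hkl hk hl hs ht
  · exact_mod_cast mul_right_cancel₀ hk (hs.symm.trans ht)
  · exact (h.scale_eq_of_lt hkl hl hk ht hs).symm

theorem SignsAgree.exists_pos_mul (h : SignsAgree (pairMeasurement ι) x y) :
    ∃ t : ℝ, 0 < t ∧ y = fun k => (t : ℂ) * x k := by
  by_cases hx : x = 0
  · refine ⟨1, one_pos, funext fun k => ?_⟩
    simpa [hx] using eq_zero_of_csign_eq (h.csign_apply_eq k) (by simp [hx])
  obtain ⟨k₀, hk₀⟩ := Function.ne_iff.mp hx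
  obtain ⟨t, ht, hy₀⟩ := exists_pos_mul_of_csign_eq (h.csign_apply_eq k₀) hk₀
  refine ⟨t, ht, funext fun k => ?_⟩
  rcases eq_or_ne (x k) 0 with hk | hk
  · rw [eq_zero_of_csign_eq (h.csign_apply_eq k) hk, hk, mul_zero]
  · obtain ⟨s, -, hy⟩ := exists_pos_mul_of_csign_eq (h.csign_apply_eq k) hk
    rw [hy, h.scale_eq hk hk₀ hy hy₀]

end PairMeasurement

theorem stmt_2_general (d : ℕ) :
    ∃ A : Matrix (Fin (d * d)) (Fin d) ℂ,
      ∀ x y : Fin d → ℂ,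
        (∀ j, csign (A.mulVec x j) = csign (A.mulVec y j)) →
          ∃ t : ℝ, 0 < t ∧ y = fun k => (t : ℂ) * x k := by
  refine ⟨(pairMeasurement (Fin d)).submatrix finProdFinEquiv.symm id, fun x y h => ?_⟩
  refine SignsAgree.exists_pos_mul fun p => ?_
  obtain ⟨j, rfl⟩ := finProdFinEquiv.symm.surjective p
  exact h j

theorem stmt_2 (d : ℕ) (hd : 1 ≤ d) :
    ∃ A : Matrix (Fin (d * d)) (Fin d) ℂ,
      ∀ x y : Fin d → ℂ,
        (∀ j, csign (A.mulVec x j) = csign (A.mulVec y j)) →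
          ∃ t : ℝ, 0 < t ∧ y = fun k => (t : ℂ) * x k :=
  stmt_2_general d
end

section
/- Let A ∈ ℂ^{m×d} have full column rank, x ∈ ℂ^d nonzero, with the discriminant matrix D_A(x) = [[Re A, Im A, Re(dg(Ax))], [-Im A, Re A, -Im(dg(Ax))]]. If rank(D_A(x)) ≥ 2d + m - 1, then Ax has no zero entries (|N(Ax)| = m) and x ∈ W_A. Conversely if x ∈ W_A and Ax has no zero entries then rank(D_A(x)) = 2d + m - 1. -/
def Wset {m d : ℕ} (B : Matrix (Fin m) (Fin d) ℂ) : Set (Fin d → ℂ) :=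
  {x | ∀ y : Fin d → ℂ,
    (∀ j, csign (B.mulVec y j) = csign (B.mulVec x j)) →
      ∃ t : ℝ, 0 < t ∧ x = fun k => (t : ℂ) * y k}

noncomputable def discD {m d : ℕ} (A : Matrix (Fin m) (Fin d) ℂ) (x : Fin d → ℂ) :
    Matrix (Fin m ⊕ Fin m) ((Fin d ⊕ Fin d) ⊕ Fin m) ℝ :=
  Matrix.fromBlocks
    (Matrix.fromCols (A.map Complex.re) (A.map Complex.im))
    (Matrix.diagonal fun j => (A.mulVec x j).re)
    (Matrix.fromCols (-(A.map Complex.im)) (A.map Complex.re))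
    (-(Matrix.diagonal fun j => (A.mulVec x j).im))

/-!
In the real coordinates `(Re z, -Im z, w)` the discriminant matrix `D_A(x)` is the map
`(z, w) ↦ A z + w ⊙ A x` on `ℂ^d × ℝ^m`, whose kernel always contains `(x, -1)`. So
`rank D_A(x) ≥ 2d + m - 1` says exactly that this kernel is the line through `(x, -1)`.
A zero entry `(A x)_j = 0` would add the kernel vector `(0, e_j)`, and a `y` with
`sign(A y) = sign(A x)` gives `A y = r ⊙ A x` with `r > 0`, i.e. the kernel vector `(y, -r)`,
which must then be a positive multiple of `(x, -1)`. Conversely, a kernel vector `(z, w)`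
yields `y = s x + z` with `A y = (s - w) ⊙ A x`; for `s` large this has the sign pattern of
`A x`, so `x ∈ W_A` forces `z ∈ ℝ x`, and full support of `A x` then forces `w` to be constant.
-/

lemma Submodule.eq_span_singleton_iff_finrank_le_one {K V : Type*} [DivisionRing K]
    [AddCommGroup V] [Module K V] {S : Submodule K V} [FiniteDimensional K S] {v : V}
    (hv : v ∈ S) (hv0 : v ≠ 0) : S = K ∙ v ↔ Module.finrank K S ≤ 1 := by
  refine ⟨fun h => h ▸ (finrank_span_singleton hv0).le, fun h => ?_⟩
  refine (Submodule.eq_of_le_of_finrank_le ((Submodule.span_singleton_le_iff_mem v S).2 hv) ?_).symm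
  rwa [finrank_span_singleton hv0]

lemma csign_ofReal_mul {t : ℝ} (ht : 0 < t) (z : ℂ) : csign (t * z) = csign z := by
  rcases eq_or_ne z 0 with rfl | hz
  · simp
  have ht' : (t : ℂ) ≠ 0 := by exact_mod_cast ht.ne'
  rw [csign, csign, if_neg (mul_ne_zero ht' hz), if_neg hz, norm_mul, Complex.norm_real,
    Real.norm_of_nonneg ht.le, Complex.ofReal_mul, mul_div_mul_left _ _ ht']

lemma exists_pos_eq_ofReal_mul_of_csign_eq {u v : ℂ} (h : csign u = csign v) (hv : v ≠ 0) :
    ∃ r : ℝ, 0 < r ∧ u = r * v := by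
  have hv' : (‖v‖ : ℂ) ≠ 0 := by simpa using hv
  have hu : u ≠ 0 := by
    rintro rfl
    rw [csign, csign, if_pos rfl, if_neg hv, eq_comm, div_eq_zero_iff] at h
    exact h.elim hv hv'
  rw [csign, csign, if_neg hu, if_neg hv, div_eq_div_iff (by simpa using hu) hv'] at h
  refine ⟨‖u‖ / ‖v‖, div_pos (norm_pos_iff.2 hu) (norm_pos_iff.2 hv), ?_⟩
  rw [Complex.ofReal_div, div_mul_eq_mul_div, eq_div_iff hv']
  linear_combination h

open Matrix

noncomputable section Discriminant

variable {m d : ℕ} (A : Matrix (Fin m) (Fin d) ℂ) (x : Fin d → ℂ)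

def discCoords : ((Fin d → ℂ) × (Fin m → ℝ)) ≃ₗ[ℝ] ((Fin d ⊕ Fin d) ⊕ Fin m → ℝ) where
  toFun p := Sum.elim (Sum.elim (fun k => (p.1 k).re) (fun k => -(p.1 k).im)) p.2
  invFun c := (fun k => ⟨c (.inl (.inl k)), -c (.inl (.inr k))⟩, fun j => c (.inr j))
  map_add' p q := by ext ((k | k) | j) <;> simp [add_comm]
  map_smul' a p := by ext ((k | k) | j) <;> simp
  left_inv p := by ext k <;> simp
  right_inv c := by ext ((k | k) | j) <;> simp

def discKer : Submodule ℝ ((Fin d → ℂ) × (Fin m → ℝ)) :=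
  LinearMap.ker ((discD A x).mulVecLin ∘ₗ discCoords.toLinearMap)

lemma discD_mulVec_discCoords (p : (Fin d → ℂ) × (Fin m → ℝ)) :
    discD A x *ᵥ discCoords p =
      Sum.elim (fun j => ((A *ᵥ p.1) j + p.2 j * (A *ᵥ x) j).re)
        (fun j => -((A *ᵥ p.1) j + p.2 j * (A *ᵥ x) j).im) := by
  ext (j | j) <;>
    simp [discD, discCoords, Matrix.mulVec, dotProduct, Fintype.sum_sum_type, Matrix.fromBlocks,
      Matrix.diagonal, Complex.re_sum, Complex.im_sum, Complex.mul_re, Complex.mul_im,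
      Finset.sum_add_distrib] <;> ring

lemma mem_discKer {p : (Fin d → ℂ) × (Fin m → ℝ)} :
    p ∈ discKer A x ↔ ∀ j, (A *ᵥ p.1) j + p.2 j * (A *ᵥ x) j = 0 := by
  simp only [discKer, LinearMap.mem_ker, LinearMap.comp_apply, Matrix.mulVecLin_apply,
    LinearEquiv.coe_coe, discD_mulVec_discCoords, funext_iff, Sum.forall, Sum.elim_inl,
    Sum.elim_inr, Pi.zero_apply, neg_eq_zero, ← forall_and, Complex.ext_iff, Complex.zero_re,
    Complex.zero_im]

lemma rank_discD_add_finrank_discKer :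
    (discD A x).rank + Module.finrank ℝ (discKer A x) = 2 * d + m := by
  rw [Matrix.rank, discKer, ← LinearMap.range_comp_of_range_eq_top _ discCoords.range,
    LinearMap.finrank_range_add_finrank_ker, Module.finrank_prod, Module.finrank_pi_fintype]
  simp [mul_comm]

lemma mk_neg_one_mem_discKer : (x, -1) ∈ discKer A x :=
  (mem_discKer A x).2 fun j => by simp

variable {A x}

lemma mulVec_ne_zero_of_discKer_le (hx : x ≠ 0) (h : discKer A x ≤ ℝ ∙ (x, -1)) (j : Fin m) :
    (A *ᵥ x) j ≠ 0 := by
  intro hj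
  have hmem : ((0 : Fin d → ℂ), Pi.single j 1) ∈ discKer A x :=
    (mem_discKer A x).2 fun i => by rcases eq_or_ne i j with rfl | _ <;> simp [*]
  obtain ⟨a, ha⟩ := Submodule.mem_span_singleton.1 (h hmem)
  rw [Prod.smul_mk, Prod.mk.injEq, smul_eq_zero] at ha
  simpa [ha.1.resolve_right hx] using congrFun ha.2 j

lemma nonempty_of_discKer_le (hx : x ≠ 0) (h : discKer A x ≤ ℝ ∙ (x, -1)) : Nonempty (Fin m) := by
  by_contra hm
  rw [not_nonempty_iff] at hm
  have hmem : (Complex.I • x, 0) ∈ discKer A x := (mem_discKer A x).2 isEmptyElim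
  obtain ⟨a, ha⟩ := Submodule.mem_span_singleton.1 (h hmem)
  obtain ⟨k, hk⟩ := Function.ne_iff.1 hx
  have hak := congrFun (congrArg Prod.fst ha) k
  simp only [Prod.smul_mk, Pi.smul_apply, Complex.real_smul, smul_eq_mul] at hak
  simpa using congrArg Complex.im (mul_right_cancel₀ hk hak)

lemma mem_Wset_of_discKer_le (hx : x ≠ 0) (h : discKer A x ≤ ℝ ∙ (x, -1)) : x ∈ Wset A := by
  obtain ⟨j₀⟩ := nonempty_of_discKer_le hx h
  intro y hy
  choose r hr hry using fun j =>
    exists_pos_eq_ofReal_mul_of_csign_eq (hy j) (mulVec_ne_zero_of_discKer_le hx h j)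
  have hmem : (y, -r) ∈ discKer A x := (mem_discKer A x).2 fun j => by simp [hry j]
  obtain ⟨a, ha⟩ := Submodule.mem_span_singleton.1 (h hmem)
  rw [Prod.smul_mk, Prod.mk.injEq, smul_neg, neg_inj] at ha
  have har : a = r j₀ := by simpa using congrFun ha.2 j₀
  refine ⟨a⁻¹, inv_pos.2 (har ▸ hr j₀), funext fun k => ?_⟩
  rw [← ha.1, Pi.smul_apply, Complex.real_smul, ← mul_assoc, ← Complex.ofReal_mul,
    inv_mul_cancel₀ (har ▸ hr j₀).ne', Complex.ofReal_one, one_mul]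

lemma discKer_eq_span_of_mem_Wset (hAx : ∀ j, (A *ᵥ x) j ≠ 0) (hW : x ∈ Wset A) :
    discKer A x = ℝ ∙ (x, -1) := by
  refine le_antisymm ?_ ((Submodule.span_singleton_le_iff_mem _ _).2 (mk_neg_one_mem_discKer A x))
  rintro ⟨z, w⟩ hzw
  rw [mem_discKer] at hzw
  obtain ⟨M, hM⟩ := (Set.finite_range w).bddAbove
  have hpos : ∀ j, 0 < M + 1 - w j := fun j => by linarith [hM (Set.mem_range_self j)]
  have hy : ∀ j, (A *ᵥ ((M + 1 : ℝ) • x + z)) j = ((M + 1 - w j : ℝ) : ℂ) * (A *ᵥ x) j := by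
    intro j
    rw [mulVec_add, mulVec_smul]
    simp only [Pi.add_apply, Pi.smul_apply, Complex.real_smul]
    push_cast
    linear_combination hzw j
  obtain ⟨t, ht, hxt⟩ := hW _ fun j => by rw [hy j, csign_ofReal_mul (hpos j)]
  have hz : z = (t⁻¹ - (M + 1)) • x := by
    ext k
    have hk := congrFun hxt k
    simp only [Pi.add_apply, Pi.smul_apply, Complex.real_smul] at hk ⊢
    have ht' : (t : ℂ) ≠ 0 := by exact_mod_cast ht.ne'
    push_cast at hk ⊢
    field_simp
    linear_combination -hk
  have hw : ∀ j, w j = -(t⁻¹ - (M + 1)) := by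
    intro j
    have hj := hzw j
    rw [hz, mulVec_smul, Pi.smul_apply, Complex.real_smul, ← add_mul, ← Complex.ofReal_add,
      mul_eq_zero, Complex.ofReal_eq_zero] at hj
    linarith [hj.resolve_right (hAx j)]
  exact Submodule.mem_span_singleton.2 ⟨t⁻¹ - (M + 1), by
    ext1
    · exact hz.symm
    · ext j; simp [hw j]⟩

end Discriminant

theorem stmt_7_general (m d : ℕ) (A : Matrix (Fin m) (Fin d) ℂ)
    (x : Fin d → ℂ) (hx : x ≠ 0) :
    ((discD A x).rank ≥ 2 * d + m - 1 → (∀ j, A.mulVec x j ≠ 0) ∧ x ∈ Wset A) ∧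
      (x ∈ Wset A → (∀ j, A.mulVec x j ≠ 0) → (discD A x).rank = 2 * d + m - 1) := by
  have hv0 : ((x, -1) : (Fin d → ℂ) × (Fin m → ℝ)) ≠ 0 := fun h => hx (congrArg Prod.fst h)
  have hker := Submodule.eq_span_singleton_iff_finrank_le_one (mk_neg_one_mem_discKer A x) hv0
  have hrank := rank_discD_add_finrank_discKer A x
  refine ⟨fun h => ?_, fun hW hAx => ?_⟩
  · have hle := (hker.2 (by omega)).le
    exact ⟨mulVec_ne_zero_of_discKer_le hx hle, mem_Wset_of_discKer_le hx hle⟩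
  · rw [discKer_eq_span_of_mem_Wset hAx hW, finrank_span_singleton hv0] at hrank
    omega

theorem stmt_7 (m d : ℕ) (A : Matrix (Fin m) (Fin d) ℂ) (hA : A.rank = d)
    (x : Fin d → ℂ) (hx : x ≠ 0) :
    ((discD A x).rank ≥ 2 * d + m - 1 → (∀ j, A.mulVec x j ≠ 0) ∧ x ∈ Wset A) ∧
      (x ∈ Wset A → (∀ j, A.mulVec x j ≠ 0) → (discD A x).rank = 2 * d + m - 1) :=
  stmt_7_general m d A x hx
end

section
/- Let d ≥ 2, let A ∈ ℂ^{m×(2d-1)} have all rows of Fourier type γ_jᵀ = (e^{i(d-1)ω_j},…,1,…,e^{-i(d-1)ω_j}), and let x ∈ ℂ^{2d-1} be conjugate symmetric (x_{-k} = conj(x_k)) with Ax having no zero entry. Then x ∉ W_A: there exists a conjugate symmetric y, not a positive multiple of x, with sign(Ay) = sign(Ax). -/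
/-- Conjugate symmetry of a vector in `ℂ^{2d-1}` indexed by `Fin (2d-1)`
(the index `k` corresponds to the integer `k - (d-1)`):
whenever `k + k' = 2d - 2`, the `k'`-th entry is the conjugate of the `k`-th. -/
def ConjSymm {d : ℕ} (x : Fin (2 * d - 1) → ℂ) : Prop :=
  ∀ k k' : Fin (2 * d - 1), k.val + k'.val = 2 * d - 2 → x k' = starRingEnd ℂ (x k)

open Filter Topology Matrix ComplexConjugate

lemma csign_ofReal (r : ℝ) : csign r = ((r / |r| : ℝ) : ℂ) := by
  by_cases hr : r = 0
  · simp [csign, hr]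
  · rw [csign, if_neg (by exact_mod_cast hr), Complex.norm_real, Real.norm_eq_abs]
    push_cast; rfl

lemma csign_ofReal_eq_of_mul_pos {a b : ℝ} (h : 0 < a * b) : csign a = csign b := by
  rw [csign_ofReal, csign_ofReal]
  rcases mul_pos_iff.mp h with ⟨ha, hb⟩ | ⟨ha, hb⟩
  · rw [abs_of_pos ha, abs_of_pos hb, div_self ha.ne', div_self hb.ne']
  · rw [abs_of_neg ha, abs_of_neg hb, div_neg, div_neg, div_self ha.ne, div_self hb.ne]

lemma exists_pos_forall_mul_add_mul_pos {ι : Type*} [Finite ι] {a : ι → ℝ} (ha : ∀ j, a j ≠ 0)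
    (b : ι → ℝ) : ∃ ε > 0, ∀ j, 0 < a j * (a j + ε * b j) := by
  have hev : ∀ j, ∀ᶠ ε in 𝓝 (0 : ℝ), 0 < a j * (a j + ε * b j) := fun j => by
    have hlim : Tendsto (fun ε => a j * (a j + ε * b j)) (𝓝 0) (𝓝 (a j * (a j + 0 * b j))) :=
      (continuous_const.mul (continuous_const.add (continuous_id.mul continuous_const))).tendsto 0
    rw [zero_mul, add_zero] at hlim
    exact hlim.eventually (lt_mem_nhds (mul_self_pos.2 (ha j)))
  obtain ⟨ε, hall, hε⟩ := ((eventually_all.2 hev).filter_mono nhdsWithin_le_nhds).and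
    (self_mem_nhdsWithin (s := Set.Ioi 0)) |>.exists
  exact ⟨ε, hε, hall⟩

lemma ofReal_re_mulVec_of_rev {m n : ℕ} {B : Matrix (Fin m) (Fin n) ℂ}
    (hB : ∀ j k, B j k.rev = conj (B j k)) {u : Fin n → ℂ} (hu : ∀ k, u k.rev = conj (u k))
    (j : Fin m) : (((B *ᵥ u) j).re : ℂ) = (B *ᵥ u) j := by
  refine Complex.conj_eq_iff_re.1 ?_
  calc conj ((B *ᵥ u) j) = ∑ k : Fin n, B j k.rev * u k.rev := by
        simp [mulVec, dotProduct, hB, hu]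
    _ = (B *ᵥ u) j := Equiv.sum_comp Fin.revPerm (fun k => B j k * u k)

lemma exp_neg_I_mul_rev_eq_conj {d : ℕ} (k : Fin (2 * d - 1)) (θ : ℝ) :
    Complex.exp (-Complex.I * (((k.rev.val : ℤ) - ((d : ℤ) - 1) : ℤ) : ℂ) * (θ : ℂ)) =
      conj (Complex.exp (-Complex.I * (((k.val : ℤ) - ((d : ℤ) - 1) : ℤ) : ℂ) * (θ : ℂ))) := by
  have hrev : ((k.rev.val : ℤ) - ((d : ℤ) - 1)) = -((k.val : ℤ) - ((d : ℤ) - 1)) := by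
    rw [Fin.val_rev]; omega
  rw [← Complex.exp_conj, hrev]
  simp only [map_mul, map_neg, Complex.conj_I, map_intCast, Complex.conj_ofReal]
  congr 1
  push_cast
  ring

lemma conjSymm_iff_rev {d : ℕ} {x : Fin (2 * d - 1) → ℂ} :
    ConjSymm x ↔ ∀ k, x k.rev = conj (x k) := by
  refine ⟨fun h k => h k k.rev (by simp only [Fin.val_rev]; omega), fun h k k' hkk => ?_⟩
  rw [show k' = k.rev by ext; simp only [Fin.val_rev]; omega, h]

lemma ConjSymm.add_ofReal_smul {d : ℕ} {x v : Fin (2 * d - 1) → ℂ} (hx : ConjSymm x)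
    (hv : ConjSymm v) (r : ℝ) : ConjSymm (x + (r : ℂ) • v) := fun k k' hkk => by
  simp [hx k k' hkk, hv k k' hkk]

lemma exists_conjSymm_forall_ne_ofReal_smul {d : ℕ} (hd : 2 ≤ d) (x : Fin (2 * d - 1) → ℂ) :
    ∃ v, ConjSymm v ∧ ∀ s : ℝ, v ≠ (s : ℂ) • x := by
  by_contra! h
  set c : Fin (2 * d - 1) := ⟨d - 1, by omega⟩
  set z : Fin (2 * d - 1) := ⟨0, by omega⟩
  have hc : c.rev = c := by ext; simp only [Fin.val_rev, c]; omega
  have hzc : z ≠ c := by simp only [ne_eq, Fin.ext_iff, z, c]; omega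
  have hzz : z ≠ z.rev := by simp only [ne_eq, Fin.ext_iff, Fin.val_rev, z]; omega
  obtain ⟨s, hs⟩ := h (Pi.single c 1) <| conjSymm_iff_rev.2 fun k => by
    simp only [Pi.single_apply, Fin.rev_eq_iff, hc]; split_ifs <;> simp
  obtain ⟨t, ht⟩ := h (Pi.single z 1 + Pi.single z.rev 1) <| conjSymm_iff_rev.2 fun k => by
    simp only [Pi.add_apply, Pi.single_apply, Fin.rev_eq_iff, Fin.rev_rev]
    split_ifs <;> simp [add_comm]
  have hsc := congrFun hs c
  have hsz := congrFun hs z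
  have htz := congrFun ht z
  simp only [Pi.single_eq_same, Pi.single_eq_of_ne hzc, Pi.single_eq_of_ne hzz, Pi.add_apply,
    Pi.smul_apply, smul_eq_mul, zero_eq_mul, Complex.ofReal_eq_zero, add_zero] at hsc hsz htz
  rcases hsz with hs0 | hxz
  · simp [hs0] at hsc
  · simp [hxz] at htz

lemma add_ofReal_smul_ne_ofReal_smul {n : ℕ} {x v : Fin n → ℂ} (hv : ∀ s : ℝ, v ≠ (s : ℂ) • x)
    {ε : ℝ} (hε : ε ≠ 0) (t : ℝ) : x + (ε : ℂ) • v ≠ (t : ℂ) • x := by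
  intro h
  have hε' : (ε : ℂ) ≠ 0 := by exact_mod_cast hε
  apply hv ((t - 1) / ε)
  funext k
  have hk := congrFun h k
  simp only [Pi.add_apply, Pi.smul_apply, smul_eq_mul] at hk ⊢
  push_cast
  field_simp
  linear_combination hk

lemma notMem_Wset_of_csign_eq {m n : ℕ} {B : Matrix (Fin m) (Fin n) ℂ} {x y : Fin n → ℂ}
    (hsign : ∀ j, csign ((B *ᵥ y) j) = csign ((B *ᵥ x) j))
    (hy : ¬ ∃ t : ℝ, 0 < t ∧ y = fun k => (t : ℂ) * x k) : x ∉ Wset B := by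
  intro hW
  obtain ⟨t, ht, hxy⟩ := hW y hsign
  refine hy ⟨t⁻¹, inv_pos.2 ht, funext fun k => ?_⟩
  have ht' : (t : ℂ) ≠ 0 := by exact_mod_cast ht.ne'
  rw [hxy]
  push_cast
  field_simp

theorem stmt_12 (d m : ℕ) (hd : 2 ≤ d)
    (A : Matrix (Fin m) (Fin (2 * d - 1)) ℂ) (ω : Fin m → ℝ)
    (hA : ∀ (j : Fin m) (k : Fin (2 * d - 1)),
      A j k = Complex.exp (-Complex.I * (((k.val : ℤ) - ((d : ℤ) - 1) : ℤ) : ℂ) * (ω j : ℂ)))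
    (x : Fin (2 * d - 1) → ℂ) (hx : ConjSymm x)
    (hnz : ∀ j, A.mulVec x j ≠ 0) :
    x ∉ Wset A ∧
      ∃ y : Fin (2 * d - 1) → ℂ, ConjSymm y ∧
        (¬ ∃ t : ℝ, 0 < t ∧ y = fun k => (t : ℂ) * x k) ∧
        (∀ j, csign (A.mulVec y j) = csign (A.mulVec x j)) := by
  have hreal : ∀ u, ConjSymm u → ∀ j, (((A *ᵥ u) j).re : ℂ) = (A *ᵥ u) j := fun u hu =>
    ofReal_re_mulVec_of_rev (fun j k => by rw [hA, hA, exp_neg_I_mul_rev_eq_conj])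
      (conjSymm_iff_rev.1 hu)
  obtain ⟨v, hv, hvx⟩ := exists_conjSymm_forall_ne_ofReal_smul hd x
  obtain ⟨ε, hε, hpos⟩ := exists_pos_forall_mul_add_mul_pos
    (a := fun j => ((A *ᵥ x) j).re)
    (fun j h => hnz j (by rw [← hreal x hx, h, Complex.ofReal_zero])) fun j => ((A *ᵥ v) j).re
  set y := x + (ε : ℂ) • v
  have hy : ConjSymm y := hx.add_ofReal_smul hv ε
  have hsign : ∀ j, csign ((A *ᵥ y) j) = csign ((A *ᵥ x) j) := fun j => by
    rw [← hreal x hx, ← hreal y hy]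
    refine csign_ofReal_eq_of_mul_pos ?_
    simpa [y, mulVec_add, mulVec_smul, mul_comm] using hpos j
  have hnot : ¬ ∃ t : ℝ, 0 < t ∧ y = fun k => (t : ℂ) * x k :=
    fun ⟨t, _, h⟩ => add_ofReal_smul_ne_ofReal_smul hvx hε.ne' t h
  exact ⟨notMem_Wset_of_csign_eq hsign hnot, y, hy, hnot, hsign⟩
end

section
/- Define A₀ ∈ ℂ^{2d×d} with top block the identity I_d and bottom block i·I_d, and b₀ = (1,…,1)ᵀ ∈ ℂ^{2d}. Then sign(A₀·0 + b₀) is the all-ones vector, every entry of A₀·0 + b₀ is nonzero, and for any y ∈ ℂ^d with sign(A₀ y + b₀) = sign(b₀) one has y = 0. Hence 0 ∈ W_{A₀,b₀} with 2d affine phase-only measurements. -/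
def Waff {d : ℕ} {ι : Type*} [Fintype ι] (A : Matrix ι (Fin d) ℂ) (b : ι → ℂ) :
    Set (Fin d → ℂ) :=
  {x | ∀ y : Fin d → ℂ,
    (∀ j, csign (A.mulVec y j + b j) = csign (A.mulVec x j + b j)) → y = x}

open scoped ComplexOrder

lemma Complex.eq_norm_iff_nonneg {z : ℂ} : z = ‖z‖ ↔ 0 ≤ z :=
  ⟨fun h => h ▸ Complex.zero_le_real.2 (norm_nonneg z), fun h => (RCLike.norm_of_nonneg' h).symm⟩

lemma csign_eq_one_iff {z : ℂ} : csign z = 1 ↔ 0 < z := by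
  by_cases hz : z = 0
  · simp [csign, hz]
  rw [csign, if_neg hz, div_eq_one_iff_eq (by simpa using hz), Complex.eq_norm_iff_nonneg,
    lt_iff_le_and_ne, and_iff_left (Ne.symm hz)]

lemma csign_one : csign 1 = 1 := csign_eq_one_iff.2 one_pos

-- `0 < z + 1` forces `Im z = 0`, and `0 < I * z + 1` forces `Re z = 0`.
lemma eq_zero_of_pos_add_one_of_pos_I_mul_add_one {z : ℂ} (h₁ : 0 < z + 1)
    (h₂ : 0 < Complex.I * z + 1) : z = 0 := by
  rw [Complex.pos_iff] at h₁ h₂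
  apply Complex.ext
  · simpa using h₂.2.symm
  · simpa using h₁.2.symm

lemma fromRows_one_I_smul_one_mulVec {d : ℕ} (y : Fin d → ℂ) :
    (Matrix.fromRows (1 : Matrix (Fin d) (Fin d) ℂ)
      (Complex.I • (1 : Matrix (Fin d) (Fin d) ℂ))).mulVec y = Sum.elim y (Complex.I • y) := by
  rw [Matrix.fromRows_mulVec, Matrix.one_mulVec, Matrix.smul_mulVec, Matrix.one_mulVec]

lemma eq_zero_of_forall_pos_sumElim_I_smul_add_one {d : ℕ} {y : Fin d → ℂ}
    (h : ∀ j, 0 < Sum.elim y (Complex.I • y) j + 1) : y = 0 :=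
  funext fun k => eq_zero_of_pos_add_one_of_pos_I_mul_add_one (h (Sum.inl k)) (h (Sum.inr k))

theorem stmt_16 (d : ℕ)
    (A₀ : Matrix (Fin d ⊕ Fin d) (Fin d) ℂ)
    (hA₀ : A₀ = Matrix.fromRows (1 : Matrix (Fin d) (Fin d) ℂ)
      (Complex.I • (1 : Matrix (Fin d) (Fin d) ℂ)))
    (b₀ : Fin d ⊕ Fin d → ℂ) (hb₀ : b₀ = fun _ => 1) :
    (∀ j, A₀.mulVec 0 j + b₀ j ≠ 0) ∧
    (∀ j, csign (A₀.mulVec 0 j + b₀ j) = 1) ∧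
    (∀ y : Fin d → ℂ, (∀ j, csign (A₀.mulVec y j + b₀ j) = csign (b₀ j)) → y = 0) ∧
    (0 : Fin d → ℂ) ∈ Waff A₀ b₀ := by
  subst hb₀
  have unique : ∀ y : Fin d → ℂ, (∀ j, csign (A₀.mulVec y j + 1) = 1) → y = 0 := fun y h =>
    eq_zero_of_forall_pos_sumElim_I_smul_add_one fun j => by
      rw [← fromRows_one_I_smul_one_mulVec, ← hA₀]
      exact csign_eq_one_iff.1 (h j)
  refine ⟨by simp, by simp [csign_one], fun y h => unique y (by simpa [csign_one] using h),
    fun y h => unique y (by simpa [csign_one] using h)⟩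
end

section
/- Fix A ∈ ℂ^{m×d} and a nonzero x ∈ ℂ^d with Ax having no zero entries. Define V_x = {λ ∈ ℝ^m : ∃ y ∈ ℂ^d, Ay = dg(sign(Ax))·λ}. Then V_x is a real subspace of ℝ^m, the vector |Ax| (entrywise modulus) lies in V_x, and dim_ℝ V_x = 2d + m - rank_ℝ([φ(A), -φ₁(dg(sign(Ax)))]), where φ(A) = [[Re A, Im A],[-Im A, Re A]] and φ₁(M) = [Re M; -Im M], provided A has full column rank. -/
/-- `φ(A) = [[Re A, Im A], [-Im A, Re A]]`. -/
def phiMap {n₁ n₂ : ℕ} (A : Matrix (Fin n₁) (Fin n₂) ℂ) :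
    Matrix (Fin n₁ ⊕ Fin n₁) (Fin n₂ ⊕ Fin n₂) ℝ :=
  Matrix.fromBlocks (A.map Complex.re) (A.map Complex.im)
    (-(A.map Complex.im)) (A.map Complex.re)

/-- `φ₁(M) = [Re M; -Im M]`. -/
def phiOne {n₁ n₂ : ℕ} (M : Matrix (Fin n₁) (Fin n₂) ℂ) :
    Matrix (Fin n₁ ⊕ Fin n₁) (Fin n₂) ℝ :=
  Matrix.fromRows (M.map Complex.re) (-(M.map Complex.im))

open Matrix Module

theorem csign_mul_norm (z : ℂ) : csign z * (‖z‖ : ℂ) = z := by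
  by_cases hz : z = 0
  · simp [hz]
  · rw [csign, if_neg hz, div_mul_cancel₀ _ (by simpa using hz)]

theorem Matrix.ker_mulVecLin_eq_bot_of_rank_eq_card {K m n : Type*} [Field K] [Fintype n]
    (A : Matrix m n K) (hA : A.rank = Fintype.card n) : LinearMap.ker A.mulVecLin = ⊥ := by
  have h := A.mulVecLin.finrank_range_add_finrank_ker
  rw [← rank, hA, finrank_fintype_fun_eq_card] at h
  exact Submodule.finrank_eq_zero.mp (by omega)

/-- The coordinates `[Re z; -Im z]`: with this sign `φ(A)` represents `A`. -/
def realifyEquiv (n : Type*) : (n → ℂ) ≃ₗ[ℝ] (n ⊕ n → ℝ) where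
  toFun z := Sum.elim (fun k => (z k).re) (fun k => -(z k).im)
  invFun w k := ⟨w (.inl k), -w (.inr k)⟩
  map_add' z w := by ext (k | k) <;> simp [add_comm]
  map_smul' c z := by ext (k | k) <;> simp
  left_inv z := by ext; simp
  right_inv w := by ext (k | k) <;> simp

section PhaseConstraint

variable {ι κ : Type*} [Fintype κ] (A : Matrix ι κ ℂ) (s : ι → ℂ)

def phaseConstraint : (κ → ℂ) × (ι → ℝ) →ₗ[ℝ] (ι → ℂ) where
  toFun p := A *ᵥ p.1 - fun j => s j * p.2 j
  map_add' p q := by ext j; simp [mulVec_add]; ring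
  map_smul' c p := by ext j; simp [mulVec_smul]; ring

variable {A s}

theorem mem_ker_phaseConstraint {y : κ → ℂ} {lam : ι → ℝ} :
    (y, lam) ∈ LinearMap.ker (phaseConstraint A s) ↔ A *ᵥ y = fun j => s j * lam j :=
  sub_eq_zero

theorem mem_map_snd_ker_phaseConstraint {lam : ι → ℝ} :
    lam ∈ (LinearMap.ker (phaseConstraint A s)).map (LinearMap.snd ℝ _ _) ↔
      ∃ y, A *ᵥ y = fun j => s j * lam j := by
  constructor
  · rintro ⟨⟨y, lam⟩, hker, rfl⟩
    exact ⟨y, mem_ker_phaseConstraint.mp hker⟩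
  · rintro ⟨y, hy⟩
    exact ⟨(y, lam), mem_ker_phaseConstraint.mpr hy, rfl⟩

theorem finrank_map_snd_ker_phaseConstraint (hA : LinearMap.ker A.mulVecLin = ⊥) :
    finrank ℝ ((LinearMap.ker (phaseConstraint A s)).map (LinearMap.snd ℝ _ _)) =
      finrank ℝ (LinearMap.ker (phaseConstraint A s)) := by
  have hinj : Function.Injective
      (LinearMap.snd ℝ _ _ ∘ₗ (LinearMap.ker (phaseConstraint A s)).subtype) := by
    rw [injective_iff_map_eq_zero]
    rintro ⟨⟨y, lam⟩, hker⟩ (rfl : lam = 0)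
    have hy : A *ᵥ y = 0 := (mem_ker_phaseConstraint.mp hker).trans (by ext; simp)
    simp [ker_mulVecLin_eq_bot_iff.mp hA y hy]
  rw [← LinearMap.finrank_range_of_inj hinj, LinearMap.range_comp, Submodule.range_subtype]

end PhaseConstraint

section BlockMatrix

variable {m d : ℕ} (A : Matrix (Fin m) (Fin d) ℂ)

theorem phiMap_mulVec_realifyEquiv (y : Fin d → ℂ) :
    phiMap A *ᵥ realifyEquiv _ y = realifyEquiv _ (A *ᵥ y) := by
  ext (j | j) <;>
    simp [phiMap, realifyEquiv, mulVec, dotProduct, fromBlocks, Fintype.sum_sum_type,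
      Complex.re_sum, Complex.im_sum, Complex.mul_re, Complex.mul_im, Finset.sum_add_distrib,
      sub_eq_add_neg]

theorem phiOne_mulVec (v : Fin d → ℝ) :
    phiOne A *ᵥ v = realifyEquiv _ (A *ᵥ fun k => (v k : ℂ)) := by
  ext (j | j) <;>
    simp [phiOne, realifyEquiv, mulVec, dotProduct, Complex.re_sum, Complex.im_sum]

variable (s : Fin m → ℂ)

theorem fromCols_phiMap_phiOne_mulVec (y : Fin d → ℂ) (lam : Fin m → ℝ) :
    fromCols (phiMap A) (-phiOne (diagonal s)) *ᵥ Sum.elim (realifyEquiv _ y) lam =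
      realifyEquiv _ (phaseConstraint A s (y, lam)) := by
  rw [fromCols_mulVec_sumElim, neg_mulVec, phiMap_mulVec_realifyEquiv, phiOne_mulVec,
    phaseConstraint, LinearMap.coe_mk, AddHom.coe_mk, map_sub, sub_eq_add_neg]
  congr 3
  exact funext (mulVec_diagonal _ _)

theorem finrank_ker_fromCols_phiMap_phiOne :
    finrank ℝ (LinearMap.ker (fromCols (phiMap A) (-phiOne (diagonal s))).mulVecLin) =
      finrank ℝ (LinearMap.ker (phaseConstraint A s)) := by
  let e : ((Fin d → ℂ) × (Fin m → ℝ)) ≃ₗ[ℝ] ((Fin d ⊕ Fin d) ⊕ Fin m → ℝ) :=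
    ((realifyEquiv (Fin d)).prodCongr (LinearEquiv.refl ℝ (Fin m → ℝ))).trans
      (LinearEquiv.sumArrowLequivProdArrow (Fin d ⊕ Fin d) (Fin m) ℝ ℝ).symm
  have hcomp : (fromCols (phiMap A) (-phiOne (diagonal s))).mulVecLin ∘ₗ e.toLinearMap =
      (realifyEquiv _).toLinearMap ∘ₗ phaseConstraint A s :=
    LinearMap.ext fun ⟨y, lam⟩ => fromCols_phiMap_phiOne_mulVec A s y lam
  have hker : LinearMap.ker (phaseConstraint A s) =
      (LinearMap.ker (fromCols (phiMap A) (-phiOne (diagonal s))).mulVecLin).map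
        e.symm.toLinearMap := by
    rw [← Submodule.comap_equiv_eq_map_symm, ← LinearMap.ker_comp, hcomp,
      LinearMap.ker_comp_of_ker_eq_bot _ (realifyEquiv _).ker]
  rw [hker, LinearEquiv.finrank_map_eq]

end BlockMatrix

theorem stmt_18_general (m d : ℕ) (A : Matrix (Fin m) (Fin d) ℂ) (hA : A.rank = d)
    (x : Fin d → ℂ) :
    ∃ S : Submodule ℝ (Fin m → ℝ),
      (S : Set (Fin m → ℝ)) =
        {lam : Fin m → ℝ | ∃ y : Fin d → ℂ,
          A.mulVec y = fun j => csign (A.mulVec x j) * (lam j : ℂ)} ∧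
      (fun j => (‖A.mulVec x j‖ : ℝ)) ∈ S ∧
      Module.finrank ℝ S =
        2 * d + m -
          (Matrix.fromCols (phiMap A)
            (-(phiOne (Matrix.diagonal fun j => csign (A.mulVec x j))))).rank := by
  set s : Fin m → ℂ := fun j => csign ((A *ᵥ x) j)
  set B := fromCols (phiMap A) (-phiOne (diagonal s))
  refine ⟨(LinearMap.ker (phaseConstraint A s)).map (LinearMap.snd ℝ _ _),
    Set.ext fun _ => mem_map_snd_ker_phaseConstraint, ?_, ?_⟩
  · exact mem_map_snd_ker_phaseConstraint.mpr ⟨x, funext fun j => (csign_mul_norm _).symm⟩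
  · have hrankNullity := B.mulVecLin.finrank_range_add_finrank_ker
    rw [← rank, finrank_ker_fromCols_phiMap_phiOne, finrank_fintype_fun_eq_card] at hrankNullity
    rw [finrank_map_snd_ker_phaseConstraint
      (ker_mulVecLin_eq_bot_of_rank_eq_card A (by rwa [Fintype.card_fin]))]
    simp only [Fintype.card_sum, Fintype.card_fin] at hrankNullity
    omega

theorem stmt_18 (m d : ℕ) (A : Matrix (Fin m) (Fin d) ℂ) (hA : A.rank = d)
    (x : Fin d → ℂ) (hx : x ≠ 0) (hnz : ∀ j, A.mulVec x j ≠ 0) :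
    ∃ S : Submodule ℝ (Fin m → ℝ),
      (S : Set (Fin m → ℝ)) =
        {lam : Fin m → ℝ | ∃ y : Fin d → ℂ,
          A.mulVec y = fun j => csign (A.mulVec x j) * (lam j : ℂ)} ∧
      (fun j => (‖A.mulVec x j‖ : ℝ)) ∈ S ∧
      Module.finrank ℝ S =
        2 * d + m -
          (Matrix.fromCols (phiMap A)
            (-(phiOne (Matrix.diagonal fun j => csign (A.mulVec x j))))).rank :=
  stmt_18_general m d A hA x
end
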